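/- arXiv:2105.07329 — 2 statements merged into one kernel-verified Lean document; each statement's English description precedes it below -/
import Mathlib

section
/- Let m ≥ 2 points be at arbitrary (fixed) locations in the unit cube [0,1]^d, and let X be uniformly distributed on [0,1]^d. Then there exists a constant ε = ε(d) > 0, independent of m and of the point locations, such that the expected distance from X to the nearest of the m points is at least ε / m^(1/d). -/
/-!
Each Euclidean ball of radius `t` lies in a cube of side `2t`, so the balls of radius `t` around
the `m` points cover volume at most `m (2t)^d`. For `t = 1 / (4 m^(1/d))` this is `2^(-d) ≤ 1/2`,
so on at least half of the unit cube the nearest point is at distance `≥ t`, and Markov's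
inequality bounds the expected distance below by `t / 2 = 1 / (8 m^(1/d))`.
-/

open MeasureTheory Metric Set

section NearestPoint

variable {α ι : Type*} [MetricSpace α] [Nonempty ι]

theorem compl_setOf_le_iInf_dist_subset (p : ι → α) (t : ℝ) :
    {x | t ≤ ⨅ i, dist x (p i)}ᶜ ⊆ ⋃ i, ball (p i) t := by
  intro x hx
  rw [mem_compl_iff, mem_ofPred_eq, not_le] at hx
  exact mem_iUnion.mpr (exists_lt_of_ciInf_lt hx)

variable [Fintype ι]

theorem continuous_iInf_dist (p : ι → α) : Continuous fun x => ⨅ i, dist x (p i) := by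
  simp_rw [← Finset.inf'_univ_eq_ciInf]
  exact Continuous.finset_inf'_apply _ fun i _ => continuous_id.dist continuous_const

variable [MeasurableSpace α]

theorem measure_sub_sum_measure_ball_le_restrict (μ : Measure α) (S : Set α) (p : ι → α)
    (t : ℝ) : μ S - ∑ i, μ (ball (p i) t) ≤ μ.restrict S {x | t ≤ ⨅ i, dist x (p i)} := by
  set A := {x | t ≤ ⨅ i, dist x (p i)}
  rw [tsub_le_iff_right]
  calc μ S ≤ μ (A ∩ S) + μ (S \ A) := by
        rw [inter_comm]; exact measure_le_inter_add_sdiff μ S A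
    _ ≤ μ.restrict S A + μ (⋃ i, ball (p i) t) :=
        add_le_add (μ.le_restrict_apply S A)
          (measure_mono (sdiff_subset_compl S A |>.trans (compl_setOf_le_iInf_dist_subset p t)))
    _ ≤ μ.restrict S A + ∑ i, μ (ball (p i) t) :=
        add_le_add_right (measure_iUnion_fintype_le μ _) _

theorem mul_toReal_sub_le_setIntegral_iInf_dist [OpensMeasurableSpace α] {μ : Measure α}
    [IsFiniteMeasureOnCompacts μ] {S : Set α} (hS : IsCompact S) (p : ι → α) {t : ℝ}
    (ht : 0 ≤ t) :
    t * (μ S - ∑ i, μ (ball (p i) t)).toReal ≤ ∫ x in S, ⨅ i, dist x (p i) ∂μ := by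
  have : IsFiniteMeasure (μ.restrict S) := isFiniteMeasure_restrict.mpr hS.measure_ne_top
  calc t * (μ S - ∑ i, μ (ball (p i) t)).toReal
      ≤ t * (μ.restrict S).real {x | t ≤ ⨅ i, dist x (p i)} := by
        gcongr
        exact ENNReal.toReal_mono (measure_ne_top _ _)
          (measure_sub_sum_measure_ball_le_restrict μ S p t)
    _ ≤ ∫ x in S, ⨅ i, dist x (p i) ∂μ :=
        mul_meas_ge_le_integral_of_nonneg
          (.of_forall fun _ => le_ciInf fun _ => dist_nonneg)
          ((continuous_iInf_dist p).continuousOn.integrableOn_compact hS) t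

end NearestPoint

namespace EuclideanSpace

variable {ι : Type*}

theorem setOf_forall_mem_Icc_eq_preimage (a b : ι → ℝ) :
    {x : EuclideanSpace ℝ ι | ∀ j, x j ∈ Icc (a j) (b j)} = WithLp.ofLp ⁻¹' Icc a b := by
  ext x
  simp [Pi.le_def, forall_and]

theorem isCompact_setOf_forall_mem_Icc (a b : ι → ℝ) :
    IsCompact {x : EuclideanSpace ℝ ι | ∀ j, x j ∈ Icc (a j) (b j)} := by
  rw [setOf_forall_mem_Icc_eq_preimage]
  exact (PiLp.homeomorph 2 _).isCompact_preimage.mpr isCompact_Icc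

variable [Fintype ι]

theorem volume_ball_le (x : EuclideanSpace ℝ ι) (r : ℝ) :
    volume (ball x r) ≤ ENNReal.ofReal ((2 * r) ^ Fintype.card ι) := by
  rcases le_or_gt r 0 with hr | hr
  · simp [ball_eq_empty.mpr hr]
  calc volume (ball x r) ≤ volume (WithLp.ofLp ⁻¹' ball (WithLp.ofLp x) r) :=
        measure_mono fun y hy => by
          simpa using (PiLp.lipschitzWith_ofLp 2 _).dist_le_mul y x |>.trans_lt (by simpa using hy)
    _ = volume (ball (WithLp.ofLp x) r) :=
        (PiLp.volume_preserving_ofLp ι).measure_preimage measurableSet_ball.nullMeasurableSet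
    _ = _ := Real.volume_pi_ball _ hr

theorem volume_setOf_forall_mem_Icc (a b : ι → ℝ) :
    volume {x : EuclideanSpace ℝ ι | ∀ j, x j ∈ Icc (a j) (b j)} =
      ∏ j, ENNReal.ofReal (b j - a j) := by
  rw [setOf_forall_mem_Icc_eq_preimage, (PiLp.volume_preserving_ofLp ι).measure_preimage
    measurableSet_Icc.nullMeasurableSet, Real.volume_Icc_pi]


theorem sum_volume_ball_le {κ : Type*} [Fintype κ] (p : κ → EuclideanSpace ℝ ι) (r : ℝ) :
    ∑ i, volume (ball (p i) r) ≤
      ENNReal.ofReal (Fintype.card κ * (2 * r) ^ Fintype.card ι) := by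
  rw [ENNReal.ofReal_mul (by positivity), ENNReal.ofReal_natCast, ← Finset.card_univ,
    ← nsmul_eq_mul, ← Finset.sum_const]
  exact Finset.sum_le_sum fun i _ => volume_ball_le (p i) r

end EuclideanSpace

theorem mul_two_mul_inv_four_mul_rpow_pow {d : ℕ} (hd : d ≠ 0) {x : ℝ} (hx : 0 < x) :
    x * (2 * (4 * x ^ ((1 : ℝ) / d))⁻¹) ^ d = (2 ^ d)⁻¹ := by
  have hxd : (x ^ ((1 : ℝ) / d)) ^ d = x := by
    rw [one_div, Real.rpow_inv_natCast_pow hx.le hd]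
  rw [show (2 : ℝ) * (4 * x ^ ((1 : ℝ) / d))⁻¹ = (2 * x ^ ((1 : ℝ) / d))⁻¹ by ring,
    inv_pow, mul_pow, hxd]
  field_simp

/-- For m ≥ 2 points at arbitrary fixed locations in the unit cube `[0,1]^d`, with `X`
uniform on the cube, the expected distance from `X` to the nearest point is at least
`ε / m^(1/d)` for a constant `ε = ε(d) > 0` independent of `m` and the point locations. -/
theorem expected_nearest_neighbor_lower_bound (d : ℕ) (hd : 1 ≤ d) :
    ∃ ε : ℝ, 0 < ε ∧ ∀ (m : ℕ), 2 ≤ m →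
      ∀ p : Fin m → EuclideanSpace ℝ (Fin d),
        (∀ i, ∀ j : Fin d, p i j ∈ Set.Icc (0:ℝ) 1) →
        ε / (m : ℝ) ^ ((1:ℝ) / d) ≤
          ∫ x in {x : EuclideanSpace ℝ (Fin d) | ∀ j, x j ∈ Set.Icc (0:ℝ) 1},
            (⨅ i, dist x (p i)) ∂volume := by
  refine ⟨1 / 8, by norm_num, fun m hm p _ => ?_⟩
  have : Nonempty (Fin m) := ⟨⟨0, by omega⟩⟩
  set t := (4 * (m : ℝ) ^ ((1 : ℝ) / d))⁻¹
  have hballs : ∑ i, volume (ball (p i) t) ≤ 2⁻¹ := calc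
    _ ≤ ENNReal.ofReal (m * (2 * t) ^ d) := by
        simpa using EuclideanSpace.sum_volume_ball_le p t
    _ ≤ ENNReal.ofReal 2⁻¹ := by
        rw [mul_two_mul_inv_four_mul_rpow_pow (by omega) (by positivity)]
        exact ENNReal.ofReal_le_ofReal (inv_anti₀ two_pos (le_self_pow₀ one_le_two (by omega)))
    _ = 2⁻¹ := by simp
  have hcube : volume {x : EuclideanSpace ℝ (Fin d) | ∀ j, x j ∈ Set.Icc (0:ℝ) 1} = 1 := by
    simpa using EuclideanSpace.volume_setOf_forall_mem_Icc (ι := Fin d) 0 1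
  calc 1 / 8 / (m : ℝ) ^ ((1 : ℝ) / d) = t * (1 - 2⁻¹ : ENNReal).toReal := by
        rw [ENNReal.one_sub_inv_two]; simp [t]; ring
    _ ≤ t * (volume {x : EuclideanSpace ℝ (Fin d) | ∀ j, x j ∈ Set.Icc (0:ℝ) 1} -
          ∑ i, volume (ball (p i) t)).toReal := by
        rw [hcube]
        gcongr
        exact ENNReal.sub_ne_top ENNReal.one_ne_top
    _ ≤ _ := mul_toReal_sub_le_setIntegral_iInf_dist
        (EuclideanSpace.isCompact_setOf_forall_mem_Icc 0 1) p (by positivity)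
end

section
/- Let X ~ Binomial(N+M, p) and Y_t ~ Binomial(t, p) with Y_t obtained as partial sums of i.i.d. Bernoulli(p) variables independent of X, where M ≤ N and M ≥ √(19 N / p). Then for every t < N, Pr(Y_t ≥ X) ≤ 2 exp(−(N+M−t)² p / (19 N)). -/
/-!
Chernoff's method applied to `Y - X`: for `s ≥ 0`, `1[X ≤ Y] ≤ e^{-sX} e^{sY}`, and by
independence the right side has expectation `(1 - p + p e^{-s})^{N+M} (1 - p + p e^s)^t
≤ exp (p ((N+M)(e^{-s} - 1) + t (e^s - 1)))`. Expanding `e^{±s}` to second order and choosing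
`s = (n - t) / (2 (n + t))` with `n = N + M` bounds the exponent by `-p (n - t)² / (4 (n + t))`,
and `4 (n + t) ≤ 19 N` because `M ≤ N` and `t < N`.
-/

open Finset

/-- The probability that a Binomial(n,p) variable equals k. -/
noncomputable def binomPMF (n : ℕ) (p : ℝ) (k : ℕ) : ℝ :=
  (n.choose k : ℝ) * p ^ k * (1 - p) ^ (n - k)

open Real

lemma binomPMF_nonneg {n : ℕ} {p : ℝ} (hp0 : 0 ≤ p) (hp1 : p ≤ 1) (k : ℕ) :
    0 ≤ binomPMF n p k := by
  have : 0 ≤ 1 - p := by linarith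
  unfold binomPMF
  positivity

lemma sum_binomPMF_mul_pow (n : ℕ) (p a : ℝ) :
    ∑ k ∈ range (n + 1), binomPMF n p k * a ^ k = (1 - p + p * a) ^ n := by
  rw [show 1 - p + p * a = p * a + (1 - p) by ring, add_pow]
  refine sum_congr rfl fun k _ => ?_
  rw [binomPMF, mul_pow]
  ring

lemma sum_binomPMF_mul_exp_pow_le {p : ℝ} (hp0 : 0 ≤ p) (hp1 : p ≤ 1) (n : ℕ) (s : ℝ) :
    ∑ k ∈ range (n + 1), binomPMF n p k * exp s ^ k ≤ exp (n * (p * (exp s - 1))) := by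
  have hbase : 0 ≤ 1 - p + p * exp s := by nlinarith [exp_pos s]
  rw [sum_binomPMF_mul_pow, exp_nat_mul]
  refine pow_le_pow_left₀ hbase ?_ n
  linarith [add_one_le_exp (p * (exp s - 1))]

lemma sum_sum_mul_ite_le_le_mul_exp {f g : ℕ → ℝ} (hf : ∀ x, 0 ≤ f x) (hg : ∀ y, 0 ≤ g y)
    {s : ℝ} (hs : 0 ≤ s) (A B : Finset ℕ) :
    ∑ x ∈ A, ∑ y ∈ B, f x * g y * (if x ≤ y then (1 : ℝ) else 0)
      ≤ (∑ x ∈ A, f x * exp (-s) ^ x) * ∑ y ∈ B, g y * exp s ^ y := by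
  rw [sum_mul_sum]
  refine sum_le_sum fun x _ => sum_le_sum fun y _ => ?_
  have hind : (if x ≤ y then (1 : ℝ) else 0) ≤ exp (-s) ^ x * exp s ^ y := by
    split_ifs with hxy
    · rw [← exp_nat_mul, ← exp_nat_mul, ← exp_add, one_le_exp_iff]
      have : (x : ℝ) ≤ y := by exact_mod_cast hxy
      nlinarith
    · positivity
  calc f x * g y * (if x ≤ y then (1 : ℝ) else 0)
      ≤ f x * g y * (exp (-s) ^ x * exp s ^ y) :=
        mul_le_mul_of_nonneg_left hind (mul_nonneg (hf x) (hg y))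
    _ = f x * exp (-s) ^ x * (g y * exp s ^ y) := by ring

lemma exp_sub_one_le_add_sq {x : ℝ} (hx : |x| ≤ 1) : exp x - 1 ≤ x + x ^ 2 := by
  linarith [(abs_le.1 (abs_exp_sub_one_sub_id_le hx)).2]

lemma mul_exp_neg_sub_one_add_mul_exp_sub_one_le {n t : ℝ} (ht : 0 ≤ t) (htn : t ≤ n) :
    n * (exp (-((n - t) / (2 * (n + t)))) - 1) + t * (exp ((n - t) / (2 * (n + t))) - 1)
      ≤ -((n - t) ^ 2 / (4 * (n + t))) := by
  rcases (add_nonneg (ht.trans htn) ht).eq_or_lt with hsum | hsum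
  · have hn : n = 0 := by linarith
    have ht0 : t = 0 := by linarith
    simp [hn, ht0]
  set s := (n - t) / (2 * (n + t)) with hs
  have hs0 : 0 ≤ s := div_nonneg (by linarith) (by linarith)
  have hs1 : s ≤ 1 := by rw [hs, div_le_one (by linarith)]; linarith
  have hneg := exp_sub_one_le_add_sq (x := -s) (by rw [abs_neg, abs_of_nonneg hs0]; exact hs1)
  have hpos := exp_sub_one_le_add_sq (x := s) (by rw [abs_of_nonneg hs0]; exact hs1)
  -- at this `s` the quadratic bound `-(n - t) s + (n + t) s²` attains its minimum
  have hmin : -(n - t) * s + (n + t) * s ^ 2 = -((n - t) ^ 2 / (4 * (n + t))) := by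
    rw [hs]; field_simp; ring
  calc n * (exp (-s) - 1) + t * (exp s - 1)
      ≤ n * (-s + (-s) ^ 2) + t * (s + s ^ 2) := by
        gcongr; linarith
    _ = -(n - t) * s + (n + t) * s ^ 2 := by ring
    _ = _ := hmin

lemma sum_sum_binomPMF_mul_ite_le_le_exp {p : ℝ} (hp0 : 0 ≤ p) (hp1 : p ≤ 1) {n t : ℕ}
    (htn : t ≤ n) :
    ∑ x ∈ range (n + 1), ∑ y ∈ range (t + 1),
        binomPMF n p x * binomPMF t p y * (if x ≤ y then (1 : ℝ) else 0)
      ≤ exp (-(((n : ℝ) - t) ^ 2 * p / (4 * (n + t)))) := by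
  set s : ℝ := (n - t) / (2 * (n + t)) with hs
  have htn' : (t : ℝ) ≤ n := by exact_mod_cast htn
  have hs0 : 0 ≤ s := div_nonneg (by linarith) (by positivity)
  calc _ ≤ (∑ x ∈ range (n + 1), binomPMF n p x * exp (-s) ^ x)
          * ∑ y ∈ range (t + 1), binomPMF t p y * exp s ^ y :=
        sum_sum_mul_ite_le_le_mul_exp (binomPMF_nonneg hp0 hp1) (binomPMF_nonneg hp0 hp1) hs0 _ _
    _ ≤ exp (n * (p * (exp (-s) - 1))) * exp (t * (p * (exp s - 1))) :=
        mul_le_mul (sum_binomPMF_mul_exp_pow_le hp0 hp1 n (-s))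
          (sum_binomPMF_mul_exp_pow_le hp0 hp1 t s)
          (sum_nonneg fun y _ => mul_nonneg (binomPMF_nonneg hp0 hp1 y) (by positivity))
          (exp_nonneg _)
    _ = exp (p * (n * (exp (-s) - 1) + t * (exp s - 1))) := by rw [← exp_add]; ring_nf
    _ ≤ exp (p * -((n - t) ^ 2 / (4 * (n + t)))) := by
        gcongr
        exact mul_exp_neg_sub_one_add_mul_exp_sub_one_le (Nat.cast_nonneg t) htn'
    _ = _ := by ring_nf

theorem prob_demand_exceeds_supply_general (N M t : ℕ) (p : ℝ)
    (hp0 : 0 < p) (hp1 : p ≤ 1) (hMN : M ≤ N)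
    (ht : t < N) :
    (∑ x ∈ Finset.range (N + M + 1), ∑ y ∈ Finset.range (t + 1),
        binomPMF (N + M) p x * binomPMF t p y * (if (x : ℕ) ≤ y then (1:ℝ) else 0))
      ≤ 2 * Real.exp (-(((N : ℝ) + M - t) ^ 2 * p / (19 * N))) := by
  have hMN' : (M : ℝ) ≤ N := by exact_mod_cast hMN
  have ht' : (t : ℝ) < N := by exact_mod_cast ht
  have hQ : 0 < 4 * ((N + M : ℕ) + t : ℝ) := by push_cast; linarith [(t.cast_nonneg : (0 : ℝ) ≤ t)]
  have hexponent : ((N : ℝ) + M - t) ^ 2 * p / (19 * N)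
      ≤ (((N + M : ℕ) : ℝ) - t) ^ 2 * p / (4 * ((N + M : ℕ) + t)) := by
    push_cast at hQ ⊢
    exact div_le_div_of_nonneg_left (by positivity) hQ (by linarith)
  calc _ ≤ exp (-((((N + M : ℕ) : ℝ) - t) ^ 2 * p / (4 * ((N + M : ℕ) + t)))) :=
        sum_sum_binomPMF_mul_ite_le_le_exp hp0.le hp1 (by omega)
    _ ≤ exp (-(((N : ℝ) + M - t) ^ 2 * p / (19 * N))) := exp_le_exp.2 (neg_le_neg hexponent)
    _ ≤ _ := le_mul_of_one_le_left (exp_nonneg _) one_le_two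

/-- For independent `X ~ Binomial(N+M, p)` and `Y_t ~ Binomial(t, p)`, with `M ≤ N` and
`M ≥ √(19 N / p)`, for every `t < N` we have
`Pr(Y_t ≥ X) ≤ 2 exp(−(N+M−t)² p / (19 N))`. -/
theorem prob_demand_exceeds_supply (N M t : ℕ) (p : ℝ)
    (hp0 : 0 < p) (hp1 : p ≤ 1) (hMN : M ≤ N)
    (hM : Real.sqrt (19 * N / p) ≤ M) (ht : t < N) :
    (∑ x ∈ Finset.range (N + M + 1), ∑ y ∈ Finset.range (t + 1),
        binomPMF (N + M) p x * binomPMF t p y * (if (x : ℕ) ≤ y then (1:ℝ) else 0))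
      ≤ 2 * Real.exp (-(((N : ℝ) + M - t) ^ 2 * p / (19 * N))) :=
  prob_demand_exceeds_supply_general N M t p hp0 hp1 hMN ht
end
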